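/- Let X be a nonempty complete metric space equipped with a midpoint map m, and assume (X,m) is Busemann non-positively curved and uniformly convex. Let Γ be a group acting on X by isometries with a finite generating set Σ such that d_Σ(x) → ∞ as x → ∞. Then the family of nonempty closed convex Γ-invariant subsets of X has a minimal element with respect to inclusion. -/

import Mathlib

/-!
By Zorn's lemma it suffices that every chain of nonempty closed convex `Γ`-invariant sets has
nonempty intersection. Fix a base point `x` and let `r` be the supremum of the distances from `x`
to the members of the chain. By uniform convexity, the points of a member that lie within `r + η`
of `x` are uniformly close to each other once `η` is small, so they converge to a point of every
member, provided `r` is finite. Finiteness is where properness of `d_Σ` enters: if a convex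
invariant set is far from `x`, a point of it almost nearest to `x` has displacement small compared
with its distance to `x`, and since `d_Σ` is convex along midpoints, halving the segment towards
`x` produces points far from `x` of bounded displacement.
-/

/-- `m` is a midpoint map on the metric space `X`. -/
def IsMidpointMap {X : Type*} [MetricSpace X] (m : X → X → X) : Prop :=
  ∀ x y : X, dist x (m x y) = dist x y / 2 ∧ dist y (m x y) = dist x y / 2

/-- `(X, m)` is Busemann non-positively curved. -/
def IsBNPC {X : Type*} [MetricSpace X] (m : X → X → X) : Prop :=
  ∀ x₁ y₁ x₂ y₂ : X, dist (m x₁ y₁) (m x₂ y₂) ≤ (dist x₁ x₂ + dist y₁ y₂) / 2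

/-- `(X, m)` is uniformly convex. -/
def IsUC {X : Type*} [MetricSpace X] (m : X → X → X) : Prop :=
  ∃ δ : ℝ → ℝ, (∀ ε : ℝ, 0 < ε → 0 < δ ε) ∧
    ∀ (ε r : ℝ) (x y₁ y₂ : X), 0 < ε → 0 < r → dist x y₁ ≤ r → dist x y₂ ≤ r →
      ε * r ≤ dist y₁ y₂ → dist x (m y₁ y₂) ≤ (1 - δ ε) * r

/-- A subset `C` is convex with respect to the midpoint map `m`. -/
def MConvex {X : Type*} [MetricSpace X] (m : X → X → X) (C : Set X) : Prop :=
  ∀ y₁ ∈ C, ∀ y₂ ∈ C, m y₁ y₂ ∈ C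

/-- The displacement function `d_Σ(x) = max_{σ ∈ Σ} d(σ·x, x)` (`0` if `Σ = ∅`). -/
noncomputable def displ {Γ X : Type*} [Group Γ] [MetricSpace X] [MulAction Γ X]
    (S : Finset Γ) (x : X) : ℝ :=
  S.fold max 0 fun σ => dist (σ • x) x

open Metric

theorem apply_iterate_midpoint_le {X : Type*} {m : X → X → X} {f : X → ℝ}
    (hf : ∀ a b, f (m a b) ≤ (f a + f b) / 2) (x y : X) (k : ℕ) :
    f ((m x)^[k] y) ≤ f x + (f y - f x) / 2 ^ k := by
  induction k with
  | zero => simp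
  | succ k ih =>
    rw [Function.iterate_succ_apply', pow_succ]
    calc f (m x ((m x)^[k] y)) ≤ (f x + f ((m x)^[k] y)) / 2 := hf _ _
      _ ≤ (f x + (f x + (f y - f x) / 2 ^ k)) / 2 := by gcongr
      _ = f x + (f y - f x) / (2 ^ k * 2) := by ring

section Midpoint

variable {X : Type*} [MetricSpace X] {m : X → X → X}

def IsUCWith (m : X → X → X) (δ : ℝ → ℝ) : Prop :=
  ∀ (ε r : ℝ) (x y₁ y₂ : X), 0 < ε → 0 < r → dist x y₁ ≤ r → dist x y₂ ≤ r →
    ε * r ≤ dist y₁ y₂ → dist x (m y₁ y₂) ≤ (1 - δ ε) * r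

theorem isUC_iff : IsUC m ↔ ∃ δ : ℝ → ℝ, (∀ ε : ℝ, 0 < ε → 0 < δ ε) ∧ IsUCWith m δ :=
  Iff.rfl

theorem IsUCWith.dist_lt_of_lt_dist_midpoint {δ : ℝ → ℝ} (hδ : IsUCWith m δ) {ε r : ℝ}
    {x y₁ y₂ : X} (hε : 0 < ε) (hr : 0 < r) (h₁ : dist x y₁ ≤ r) (h₂ : dist x y₂ ≤ r)
    (hmid : (1 - δ ε) * r < dist x (m y₁ y₂)) : dist y₁ y₂ < ε * r :=
  lt_of_not_ge fun h => (hδ ε r x y₁ y₂ hε hr h₁ h₂ h).not_gt hmid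

theorem IsMidpointMap.midpoint_self (hm : IsMidpointMap m) (x : X) : m x x = x := by
  simpa [eq_comm] using (hm x x).1

theorem IsBNPC.dist_midpoint_le (hm : IsMidpointMap m) (hB : IsBNPC m) (x u v : X) :
    dist x (m u v) ≤ (dist x u + dist x v) / 2 := by
  simpa only [hm.midpoint_self] using hB x x u v

theorem IsMidpointMap.dist_iterate (hm : IsMidpointMap m) (x y : X) (k : ℕ) :
    dist x ((m x)^[k] y) = dist x y / 2 ^ k := by
  induction k with
  | zero => simp
  | succ k ih => rw [Function.iterate_succ_apply', (hm x _).1, ih, pow_succ, div_div]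

/-- Halve the segment from `x` to `q` about `log₂ (d(x, q) / T)` times. -/
theorem IsMidpointMap.exists_le_dist_apply_le (hm : IsMidpointMap m) {f : X → ℝ}
    (hf : ∀ a b, f (m a b) ≤ (f a + f b) / 2) (hf₀ : ∀ y, 0 ≤ f y) {T : ℝ} (hT : 0 < T) {x q : X}
    (hq : T ≤ dist x q) : ∃ w, T ≤ dist x w ∧ f w ≤ f x + 2 * T * f q / dist x q := by
  obtain ⟨k, hk₁, hk₂⟩ := exists_nat_pow_near ((one_le_div hT).mpr hq) one_lt_two
  rw [le_div_iff₀ hT] at hk₁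
  rw [div_lt_iff₀ hT, pow_succ] at hk₂
  have hP : (0 : ℝ) < 2 ^ k := by positivity
  have hρ : 0 < dist x q := hT.trans_le hq
  refine ⟨(m x)^[k] q, by rwa [hm.dist_iterate, le_div_iff₀ hP, mul_comm], ?_⟩
  calc f ((m x)^[k] q) ≤ f x + (f q - f x) / 2 ^ k := apply_iterate_midpoint_le hf x q k
    _ ≤ f x + f q / 2 ^ k := by gcongr; linarith [hf₀ x]
    _ ≤ f x + 2 * T * f q / dist x q := by
      have : f q / 2 ^ k ≤ 2 * T * f q / dist x q := by
        rw [div_le_div_iff₀ hP hρ]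
        nlinarith [hf₀ q]
      linarith

/-- Otherwise the midpoint of `z` and `m a b` would be strictly nearer to `a` (uniform convexity)
and no farther from `b` (BNPC) than `dist a b / 2`, against the triangle inequality. -/
theorem eq_midpoint_of_dist_eq (hm : IsMidpointMap m) (hB : IsBNPC m) (hU : IsUC m)
    {a b z : X} (ha : dist a z = dist a b / 2) (hb : dist b z = dist a b / 2) : z = m a b := by
  obtain ⟨δ, hδpos, hδ⟩ := hU
  by_contra hne
  set r := dist a b / 2
  have hr : 0 < r := by
    refine (div_nonneg dist_nonneg zero_le_two).lt_of_ne fun h => hne ?_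
    exact (dist_eq_zero.mp (ha.trans h.symm)).symm.trans (dist_eq_zero.mp ((hm a b).1.trans h.symm))
  have hε : 0 < dist z (m a b) / r := div_pos (dist_pos.mpr hne) hr
  have hza : dist a (m z (m a b)) ≤ (1 - δ (dist z (m a b) / r)) * r :=
    hδ _ r a z _ hε hr ha.le (hm a b).1.le (div_mul_cancel₀ _ hr.ne').le
  have hzb : dist b (m z (m a b)) ≤ (dist b z + dist b (m a b)) / 2 :=
    hB.dist_midpoint_le hm b z _
  have := dist_triangle_right a b (m z (m a b))
  have hab : dist a b = 2 * r := by ring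
  rw [hb, (hm a b).2] at hzb
  nlinarith [mul_pos (hδpos _ hε) hr]

theorem Isometry.map_midpoint (hm : IsMidpointMap m) (hB : IsBNPC m) (hU : IsUC m)
    {f : X → X} (hf : Isometry f) (a b : X) : f (m a b) = m (f a) (f b) := by
  apply eq_midpoint_of_dist_eq hm hB hU <;> simp only [hf.dist_eq, hm a b]

end Midpoint

section Displacement

variable {Γ X : Type*} [Group Γ] [MetricSpace X] [MulAction Γ X] {S : Finset Γ}

theorem displ_nonneg (S : Finset Γ) (x : X) : 0 ≤ displ S x :=
  (Finset.le_fold_max _).mpr (Or.inl le_rfl)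

theorem dist_smul_le_displ {σ : Γ} (hσ : σ ∈ S) (x : X) : dist (σ • x) x ≤ displ S x :=
  (Finset.le_fold_max _).mpr (Or.inr ⟨σ, hσ, le_rfl⟩)

theorem displ_le {t : ℝ} (ht : 0 ≤ t) {x : X} (h : ∀ σ ∈ S, dist (σ • x) x ≤ t) :
    displ S x ≤ t :=
  (Finset.fold_max_le _).mpr ⟨ht, h⟩

theorem displ_midpoint_le {m : X → X → X} (hm : IsMidpointMap m) (hB : IsBNPC m) (hU : IsUC m)
    (hiso : ∀ γ : Γ, Isometry fun x : X => γ • x) (a b : X) :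
    displ S (m a b) ≤ (displ S a + displ S b) / 2 := by
  refine displ_le (by linarith [displ_nonneg S a, displ_nonneg S b]) fun σ hσ => ?_
  rw [(hiso σ).map_midpoint hm hB hU]
  linarith [hB (σ • a) (σ • b) a b, dist_smul_le_displ hσ a, dist_smul_le_displ hσ b]

/-- Otherwise the midpoint of `q` and some `σ • q`, a point of `C`, would be nearer to `x` than
`infDist x C`. -/
theorem displ_le_of_almost_nearest {m : X → X → X} {δ : ℝ → ℝ} (hδ : IsUCWith m δ)
    (hiso : ∀ γ : Γ, Isometry fun x : X => γ • x) {ε : ℝ} (hε : 0 < ε) {C : Set X}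
    (hC : MConvex m C) (hinv : ∀ σ ∈ S, ∀ y ∈ C, σ • y ∈ C) {x q : X} (hq : q ∈ C)
    (hnear : (1 - δ ε) * (dist x q + displ S x) < infDist x C) :
    displ S q ≤ ε * (dist x q + displ S x) := by
  have hle : infDist x C ≤ dist x q := infDist_le_dist_of_mem hq
  have hpos : 0 < dist x q + displ S x := by
    by_contra! h
    have h0 : dist x q + displ S x = 0 := le_antisymm h (add_nonneg dist_nonneg (displ_nonneg S x))
    rw [h0, mul_zero] at hnear
    linarith [displ_nonneg S x]
  refine displ_le (mul_pos hε hpos).le fun σ hσ => ?_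
  have hσq : dist x (σ • q) ≤ dist x q + displ S x := by
    calc dist x (σ • q) ≤ dist x (σ • x) + dist (σ • x) (σ • q) := dist_triangle _ _ _
      _ ≤ displ S x + dist x q := by
        rw [(hiso σ).dist_eq, dist_comm]; gcongr; exact dist_smul_le_displ hσ x
      _ = dist x q + displ S x := add_comm _ _
  rw [dist_comm]
  refine (hδ.dist_lt_of_lt_dist_midpoint hε hpos (by linarith [displ_nonneg S x]) hσq ?_).le
  exact hnear.trans_le (infDist_le_dist_of_mem (hC q hq _ (hinv σ hσ q hq)))

end Displacement

/-- If `C` were far from `x`, a point `q ∈ C` almost nearest to `x` would have displacement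
`≤ ε d(x, q)`; halving towards `x` then gives a point at distance `≥ T` from `x` with displacement
`≤ d_Σ(x) + 1`, whereas `d_Σ ≥ d_Σ(x) + 2` outside the ball of radius `T`. -/
theorem exists_infDist_le_of_invariant {Γ X : Type*} [Group Γ] [MetricSpace X] [MulAction Γ X]
    {m : X → X → X} (hm : IsMidpointMap m) (hB : IsBNPC m) (hU : IsUC m)
    (hiso : ∀ γ : Γ, Isometry fun x : X => γ • x) {S : Finset Γ}
    (hdisp : Filter.Tendsto (displ S) (Bornology.cobounded X) Filter.atTop) (x : X) :
    ∃ R₀ : ℝ, ∀ C : Set X, C.Nonempty → MConvex m C → (∀ γ : Γ, ∀ y ∈ C, γ • y ∈ C) →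
      infDist x C ≤ R₀ := by
  obtain ⟨δ, hδpos, hδ⟩ := isUC_iff.mp hU
  set t := displ S x
  obtain ⟨R, -, hR⟩ := (hasBasis_cobounded_compl_closedBall x).eventually_iff.mp
    (hdisp.eventually (Filter.eventually_ge_atTop (t + 2)))
  set T := max R 0 + 1
  have hT : 0 < T := by positivity
  set ε := 1 / (4 * T)
  have hε : 0 < ε := by positivity
  have hδε : 0 < δ ε := hδpos ε hε
  refine ⟨max (max T t) ((1 + t) / δ ε), fun C hne hC hinv => ?_⟩
  by_contra! hfar
  set r := infDist x C
  rw [max_lt_iff, max_lt_iff, div_lt_iff₀ hδε] at hfar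
  obtain ⟨⟨hTr, htr⟩, hδr⟩ := hfar
  obtain ⟨q, hqC, hq⟩ := (infDist_lt_iff hne).mp (lt_add_one r)
  set ρ := dist x q
  have hrρ : r ≤ ρ := infDist_le_dist_of_mem hqC
  have hq_displ : displ S q ≤ ε * (ρ + t) := by
    refine displ_le_of_almost_nearest hδ hiso hε hC (fun σ _ => hinv σ) hqC ?_
    have : δ ε * r ≤ δ ε * (ρ + t) := by gcongr; linarith [displ_nonneg S x]
    change (1 - δ ε) * (ρ + t) < r
    linarith
  obtain ⟨w, hxw, hw⟩ := hm.exists_le_dist_apply_le (displ_midpoint_le (S := S) hm hB hU hiso)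
    (displ_nonneg S) hT (hTr.trans_le hrρ).le
  have hw_far : t + 2 ≤ displ S w :=
    @hR w fun hw => absurd (mem_closedBall'.mp hw) (by linarith [le_max_left R 0])
  have hw_near : displ S w ≤ t + 1 := by
    have hρ : 0 < ρ := hT.trans (hTr.trans_le hrρ)
    calc displ S w ≤ t + 2 * T * displ S q / ρ := hw
      _ ≤ t + 2 * T * (ε * (2 * ρ)) / ρ := by gcongr; exact hq_displ.trans (by gcongr; linarith)
      _ = t + 1 := by simp only [ε]; field_simp; ring
  linarith

section Chains

variable {X : Type*} [MetricSpace X] {m : X → X → X}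

/-- The midpoint `m u v ∈ A` is only `2η` nearer to `x` than `u` and `v` may be, which by uniform
convexity forces `u` and `v` to be close. -/
theorem IsUC.exists_dist_lt_of_almost_nearest (hU : IsUC m) (x : X) {r ε : ℝ} (hr : 0 ≤ r)
    (hε : 0 < ε) : ∃ η > 0, ∀ A : Set X, MConvex m A → r - η ≤ infDist x A →
      ∀ u ∈ A, ∀ v ∈ A, dist x u ≤ r + η → dist x v ≤ r + η → dist u v < ε := by
  obtain ⟨δ, hδpos, hδ⟩ := hU
  set ε₁ := ε / (r + 1)
  have hε₁ : 0 < ε₁ := by positivity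
  have hδ₁ : 0 < δ ε₁ := hδpos ε₁ hε₁
  refine ⟨min 1 (ε * δ ε₁ / 8), by positivity, fun A hA hinf u hu v hv hxu hxv => ?_⟩
  set η := min 1 (ε * δ ε₁ / 8)
  have hη : 0 < η := by positivity
  have hη₁ : η ≤ 1 := min_le_left _ _
  have hηε : η ≤ ε * δ ε₁ / 8 := min_le_right _ _
  by_contra! huv
  have hscale : ε₁ * (r + η) ≤ dist u v := by
    calc ε₁ * (r + η) ≤ ε₁ * (r + 1) := by gcongr
      _ = ε := div_mul_cancel₀ _ (by positivity)
      _ ≤ dist u v := huv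
  have hmid := hδ ε₁ (r + η) x u v hε₁ (by positivity) hxu hxv hscale
  have hlow : r - η ≤ dist x (m u v) := hinf.trans (infDist_le_dist_of_mem (hA u hu v hv))
  have key : δ ε₁ * dist u v ≤ δ ε₁ * (ε / 2) :=
    calc δ ε₁ * dist u v ≤ δ ε₁ * (2 * (r + η)) := by
          gcongr; linarith [dist_triangle_left u v x]
      _ ≤ 4 * η := by linarith
      _ ≤ δ ε₁ * (ε / 2) := by linarith
  linarith [le_of_mul_le_mul_left key hδ₁]

theorem exists_forall_mem_of_directed_of_dist_lt [CompleteSpace X] {ι : Type*} {p : ι → Prop}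
    {s : ι → Set X} (hdir : ∀ i, p i → ∀ j, p j → ∃ k, p k ∧ s k ⊆ s i ∧ s k ⊆ s j)
    (hp : ∃ i, p i) (hne : ∀ i, p i → (s i).Nonempty) (hclosed : ∀ i, p i → IsClosed (s i))
    (hsmall : ∀ ε > 0, ∃ i, p i ∧ ∀ x ∈ s i, ∀ y ∈ s i, dist x y < ε) :
    ∃ x, ∀ i, p i → x ∈ s i := by
  have hb := Filter.hasBasis_biInf_principal' hdir hp
  have hcauchy : Cauchy (⨅ (i) (_ : p i), Filter.principal (s i)) := by
    refine Metric.cauchy_iff.mpr ⟨hb.neBot_iff.mpr fun hi => hne _ hi, fun ε hε => ?_⟩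
    obtain ⟨i, hi, hsi⟩ := hsmall ε hε
    exact ⟨s i, hb.mem_of_mem hi, hsi⟩
  obtain ⟨x, hx⟩ := CompleteSpace.complete hcauchy
  have := hcauchy.1
  exact ⟨x, fun i hi => (hclosed i hi).mem_of_tendsto (Filter.tendsto_id'.mpr hx)
    (hb.mem_of_mem hi)⟩

theorem IsChain.nonempty_sInter_of_isUC [CompleteSpace X] (hU : IsUC m) {c : Set (Set X)}
    (hc : IsChain (· ⊆ ·) c) (hne : c.Nonempty)
    (hcA : ∀ A ∈ c, A.Nonempty ∧ IsClosed A ∧ MConvex m A) (x : X)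
    (hbdd : BddAbove ((infDist x ·) '' c)) : (⋂₀ c).Nonempty := by
  set r := sSup ((infDist x ·) '' c)
  have hle : ∀ A ∈ c, infDist x A ≤ r := fun A hA => le_csSup hbdd ⟨A, hA, rfl⟩
  have hr : 0 ≤ r := by
    obtain ⟨A, hA⟩ := hne
    exact infDist_nonneg.trans (hle A hA)
  let p : Set X × ℝ → Prop := fun i => i.1 ∈ c ∧ 0 < i.2
  let s : Set X × ℝ → Set X := fun i => i.1 ∩ closedBall x (r + i.2)
  have hdir : ∀ i, p i → ∀ j, p j → ∃ k, p k ∧ s k ⊆ s i ∧ s k ⊆ s j := by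
    rintro ⟨A, η⟩ ⟨hA, hη⟩ ⟨B, η'⟩ ⟨hB, hη'⟩
    have hball₁ := closedBall_subset_closedBall (x := x) (add_le_add_right (min_le_left η η') r)
    have hball₂ := closedBall_subset_closedBall (x := x) (add_le_add_right (min_le_right η η') r)
    rcases hc.total hA hB with hAB | hBA
    · exact ⟨(A, min η η'), ⟨hA, lt_min hη hη'⟩, Set.inter_subset_inter_right _ hball₁,
        Set.inter_subset_inter hAB hball₂⟩
    · exact ⟨(B, min η η'), ⟨hB, lt_min hη hη'⟩, Set.inter_subset_inter hBA hball₁,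
        Set.inter_subset_inter_right _ hball₂⟩
  have hsne : ∀ i, p i → (s i).Nonempty := by
    rintro ⟨A, η⟩ ⟨hA, hη⟩
    obtain ⟨z, hzA, hz⟩ := (infDist_lt_iff (hcA A hA).1).mp
      ((hle A hA).trans_lt (lt_add_of_pos_right r hη))
    exact ⟨z, hzA, mem_closedBall'.mpr hz.le⟩
  have hsmall : ∀ ε > 0, ∃ i, p i ∧ ∀ u ∈ s i, ∀ v ∈ s i, dist u v < ε := by
    intro ε hε
    obtain ⟨η, hη, hclose⟩ := hU.exists_dist_lt_of_almost_nearest x hr hε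
    obtain ⟨_, ⟨A, hA, rfl⟩, hAr⟩ := exists_lt_of_lt_csSup (hne.image _) (sub_lt_self r hη)
    exact ⟨(A, η), ⟨hA, hη⟩, fun u hu v hv => hclose A (hcA A hA).2.2 hAr.le u hu.1 v hv.1
      (mem_closedBall'.mp hu.2) (mem_closedBall'.mp hv.2)⟩
  obtain ⟨y, hy⟩ := exists_forall_mem_of_directed_of_dist_lt hdir
    ⟨(hne.some, 1), hne.some_mem, one_pos⟩ hsne
    (fun i hi => (hcA i.1 hi.1).2.1.inter isClosed_closedBall) hsmall
  exact ⟨y, fun A hA' => (hy (A, 1) ⟨hA', one_pos⟩).1⟩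

end Chains

theorem stmt_9_general {X : Type*} [MetricSpace X] [CompleteSpace X] [Nonempty X] (m : X → X → X)
    (hm : IsMidpointMap m) (hB : IsBNPC m) (hU : IsUC m)
    (Γ : Type*) [Group Γ] [MulAction Γ X]
    (hiso : ∀ γ : Γ, Isometry fun x : X => γ • x)
    (S : Finset Γ)
    (hdisp : Filter.Tendsto (displ S) (Bornology.cobounded X) Filter.atTop) :
    ∃ C : Set X,
      (C.Nonempty ∧ IsClosed C ∧ MConvex m C ∧ ∀ γ : Γ, ∀ x ∈ C, γ • x ∈ C) ∧
      ∀ C' : Set X,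
        (C'.Nonempty ∧ IsClosed C' ∧ MConvex m C' ∧ ∀ γ : Γ, ∀ x ∈ C', γ • x ∈ C') →
        C' ⊆ C → C' = C := by
  obtain ⟨x⟩ := ‹Nonempty X›
  obtain ⟨R₀, hR₀⟩ := exists_infDist_le_of_invariant hm hB hU hiso hdisp x
  set F : Set (Set X) :=
    {C | C.Nonempty ∧ IsClosed C ∧ MConvex m C ∧ ∀ γ : Γ, ∀ x ∈ C, γ • x ∈ C}
  have hchain : ∀ c ⊆ F, IsChain (· ⊆ ·) c → c.Nonempty → ∃ lb ∈ F, ∀ A ∈ c, lb ⊆ A := by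
    intro c hcF hc hne
    have hinter : (⋂₀ c).Nonempty := hc.nonempty_sInter_of_isUC hU hne
      (fun A hA => ⟨(hcF hA).1, (hcF hA).2.1, (hcF hA).2.2.1⟩) x
      ⟨R₀, by rintro _ ⟨A, hA, rfl⟩; exact hR₀ A (hcF hA).1 (hcF hA).2.2.1 (hcF hA).2.2.2⟩
    refine ⟨⋂₀ c, ⟨hinter, isClosed_sInter fun A hA => (hcF hA).2.1, ?_, ?_⟩,
      fun A => Set.sInter_subset_of_mem⟩
    · exact fun y₁ h₁ y₂ h₂ A hA => (hcF hA).2.2.1 y₁ (h₁ A hA) y₂ (h₂ A hA)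
    · exact fun γ y hy A hA => (hcF hA).2.2.2 γ y (hy A hA)
  have huniv : Set.univ ∈ F :=
    ⟨Set.univ_nonempty, isClosed_univ, fun _ _ _ _ => trivial, fun _ _ _ => trivial⟩
  obtain ⟨C, -, hC⟩ := zorn_superset_nonempty F hchain Set.univ huniv
  exact ⟨C, hC.prop, fun C' hC' hsub => hC.eq_of_subset hC' hsub⟩

theorem stmt_9 {X : Type*} [MetricSpace X] [CompleteSpace X] [Nonempty X] (m : X → X → X)
    (hm : IsMidpointMap m) (hB : IsBNPC m) (hU : IsUC m)
    (Γ : Type*) [Group Γ] [MulAction Γ X]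
    (hiso : ∀ γ : Γ, Isometry fun x : X => γ • x)
    (S : Finset Γ) (hgen : Subgroup.closure (S : Set Γ) = ⊤)
    (hdisp : Filter.Tendsto (displ S) (Bornology.cobounded X) Filter.atTop) :
    ∃ C : Set X,
      (C.Nonempty ∧ IsClosed C ∧ MConvex m C ∧ ∀ γ : Γ, ∀ x ∈ C, γ • x ∈ C) ∧
      ∀ C' : Set X,
        (C'.Nonempty ∧ IsClosed C' ∧ MConvex m C' ∧ ∀ γ : Γ, ∀ x ∈ C', γ • x ∈ C') →
        C' ⊆ C → C' = C :=
  stmt_9_general m hm hB hU Γ hiso S hdisp
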